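/- Let (Ω, F, P) be a probability space, (X, ‖·‖_X) a Banach space, and u : Ω × ℝ≥0 → X a stochastic process such that for each t ≥ 0 the map ω ↦ ‖u(ω,t)‖_X is measurable, and such that for every t ≥ 0 the law of ‖u(·,t)‖_X equals the law of ‖u(·,0)‖_X (in particular this holds if the process is stationary). Fix ε > 0. Assume: (1) for P-almost every ω there exists A(ω) < ∞ and an increasing function φ : ℝ≥0 → ℝ≥0 such that ‖u(ω,t) − u(ω,t')‖_X ≤ A(ω) φ(t) whenever t, t' ≥ 0 and |t − t'| ≤ 1; (2) there exists an increasing bijection ψ : ℝ≥0 → ℝ≥0 (with increasing inverse ψ⁻¹) such that E[ψ(‖u(·,0)‖_X)] < ∞. Then for P-almost every ω there exists a constant C(ω) < ∞ such that ‖u(ω,t)‖_X ≤ C(ω) · ( φ(t) + ψ⁻¹( (1+t)^{1+ε} ) ) for all t ≥ 0. -/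

import Mathlib

/-!
By identical distribution, `E[ψ(‖u(n)‖)] = E[ψ(‖u(0)‖)] < ∞` for every integer time `n`, so
Markov's inequality gives `P(ψ(‖u(n)‖) ≥ (1+n)^{1+ε}) ≤ E[ψ(‖u(0)‖)] (1+n)^{-1-ε}`, which is summable.
By Borel–Cantelli, almost surely `‖u(n)‖ ≤ ψ⁻¹((1+n)^{1+ε})` for all large `n`, and up to a
constant for all `n` since `ψ⁻¹((1+n)^{1+ε}) ≥ ψ⁻¹(1) > 0`. The increment bound over `[⌊t⌋, t]`
transfers this to all real times at the cost of the term `A(ω) φ(t)`.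
-/

open MeasureTheory NNReal ENNReal Filter ProbabilityTheory

theorem Monotone.le_of_lt_of_rightInverse {α β : Type*} [LinearOrder α] [Preorder β]
    {f : α → β} {g : β → α} (hf : Monotone f) (hg : Function.RightInverse g f) {x : α} {y : β}
    (h : f x < y) : x ≤ g y := by
  by_contra! hlt
  exact (hg y ▸ hf hlt.le).not_gt h

theorem NNReal.summable_one_add_nat_rpow_inv {p : ℝ} (hp : 1 < p) :
    Summable fun n : ℕ => ((1 + (n : ℝ≥0)) ^ p)⁻¹ := by
  rw [← NNReal.summable_coe]
  push_cast
  simpa [add_comm] using (_root_.summable_nat_add_iff 1).mpr (Real.summable_nat_rpow_inv.mpr hp)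

theorem exists_forall_le_mul_of_eventually_le {a b : ℕ → ℝ} (hb : ∀ n, 0 < b n)
    (h : ∀ᶠ n in atTop, a n ≤ b n) : ∃ C, 0 ≤ C ∧ ∀ n, a n ≤ C * b n := by
  obtain ⟨C, hC⟩ := (isBoundedUnder_of_eventually_le (a := 1)
    (h.mono fun n hn => (div_le_one (hb n)).mpr hn)).bddAbove_range
  refine ⟨max C 0, le_max_right _ _, fun n => ?_⟩
  have hn : a n / b n ≤ C := hC ⟨n, rfl⟩
  rw [div_le_iff₀ (hb n)] at hn
  exact hn.trans (by gcongr; exacts [(hb n).le, le_max_left _ _])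

theorem dist_nat_floor_le_one (t : ℝ≥0) : dist t ⌊t⌋₊ ≤ 1 := by
  have hle : ((⌊t⌋₊ : ℝ≥0) : ℝ) ≤ t := by exact_mod_cast Nat.floor_le t.2
  have hlt : (t : ℝ) < (⌊t⌋₊ : ℝ≥0) + 1 := by exact_mod_cast Nat.lt_floor_add_one t
  rw [NNReal.dist_eq, abs_le]
  constructor <;> linarith

theorem exists_norm_le_mul_add_of_forall_nat {X : Type*} [NormedAddCommGroup X] {v : ℝ≥0 → X}
    {φ g : ℝ≥0 → ℝ≥0} (hg : Monotone g) {A : ℝ}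
    (hA : ∀ t t' : ℝ≥0, dist t t' ≤ 1 → ‖v t - v t'‖ ≤ A * φ t) {C : ℝ} (hC : 0 ≤ C)
    (hnat : ∀ n : ℕ, ‖v n‖ ≤ C * g n) : ∃ K, ∀ t, ‖v t‖ ≤ K * (φ t + g t) := by
  refine ⟨max A C, fun t => ?_⟩
  have hg_floor : (g ⌊t⌋₊ : ℝ) ≤ g t := hg (Nat.floor_le t.2)
  calc ‖v t‖ ≤ ‖v ⌊t⌋₊‖ + ‖v t - v ⌊t⌋₊‖ := norm_le_norm_add_norm_sub' _ _
    _ ≤ C * g ⌊t⌋₊ + A * φ t := add_le_add (hnat _) (hA _ _ (dist_nat_floor_le_one t))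
    _ ≤ max A C * g t + max A C * φ t := by
        gcongr
        exacts [le_max_right _ _, le_max_left _ _]
    _ = max A C * (φ t + g t) := by ring

section BorelCantelli

variable {Ω : Type*} [MeasurableSpace Ω] {μ : Measure Ω}

theorem ae_eventually_lt_of_lintegral_le {f : ℕ → Ω → ℝ≥0} (hf : ∀ n, Measurable (f n))
    {I : ℝ≥0∞} (hI : I ≠ ∞) (hfI : ∀ n, ∫⁻ ω, f n ω ∂μ ≤ I) {c : ℕ → ℝ≥0} (hc0 : ∀ n, 0 < c n)
    (hc : Summable fun n => (c n)⁻¹) : ∀ᵐ ω ∂μ, ∀ᶠ n in atTop, f n ω < c n := by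
  have hmarkov : ∀ n, μ {ω | (c n : ℝ≥0∞) ≤ f n ω} ≤ I * ((c n)⁻¹ : ℝ≥0) := fun n =>
    calc μ {ω | (c n : ℝ≥0∞) ≤ f n ω} ≤ (∫⁻ ω, f n ω ∂μ) / c n :=
          meas_ge_le_lintegral_div (hf n).coe_nnreal_ennreal.aemeasurable
            (ENNReal.coe_ne_zero.mpr (hc0 n).ne') ENNReal.coe_ne_top
      _ ≤ I / c n := by gcongr; exact hfI n
      _ = I * ((c n)⁻¹ : ℝ≥0) := by
        rw [ENNReal.div_eq_inv_mul, mul_comm, ENNReal.coe_inv (hc0 n).ne']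
  have hsum : ∑' n, μ {ω | (c n : ℝ≥0∞) ≤ f n ω} ≠ ∞ := by
    refine ne_top_of_le_ne_top ?_ (ENNReal.tsum_le_tsum hmarkov)
    rw [ENNReal.tsum_mul_left]
    exact ENNReal.mul_ne_top hI (ENNReal.tsum_coe_ne_top_iff_summable.mpr hc)
  filter_upwards [ae_eventually_notMem hsum] with ω hω
  simpa using hω

theorem ae_eventually_apply_nnnorm_lt_of_map_eq {X : Type*} [NormedAddCommGroup X]
    (u : Ω → ℝ≥0 → X) (hmeas : ∀ t : ℝ≥0, Measurable fun ω => ‖u ω t‖)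
    (hlaw : ∀ t : ℝ≥0, μ.map (fun ω => ‖u ω t‖) = μ.map (fun ω => ‖u ω 0‖))
    {ψ : ℝ≥0 → ℝ≥0} (hψ : Measurable ψ) (hens : ∫⁻ ω, (ψ ‖u ω 0‖₊ : ℝ≥0∞) ∂μ < ⊤)
    {c : ℕ → ℝ≥0} (hc0 : ∀ n, 0 < c n) (hc : Summable fun n => (c n)⁻¹) :
    ∀ᵐ ω ∂μ, ∀ᶠ n : ℕ in atTop, ψ ‖u ω n‖₊ < c n := by
  have hlintegral (t : ℝ≥0) :
      ∫⁻ ω, (ψ ‖u ω t‖₊ : ℝ≥0∞) ∂μ = ∫⁻ ω, (ψ ‖u ω 0‖₊ : ℝ≥0∞) ∂μ := by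
    have hident : IdentDistrib (fun ω => ‖u ω t‖) (fun ω => ‖u ω 0‖) μ μ :=
      ⟨(hmeas t).aemeasurable, (hmeas 0).aemeasurable, hlaw t⟩
    simpa only [Function.comp_def, norm_toNNReal] using
      (hident.comp (hψ.comp measurable_real_toNNReal).coe_nnreal_ennreal).lintegral_eq
  refine ae_eventually_lt_of_lintegral_le (fun n => hψ.comp ?_) hens.ne
    (fun n => (hlintegral n).le) hc0 hc
  simpa only [norm_toNNReal] using (hmeas n).real_toNNReal

end BorelCantelli

theorem stmt2_general {Ω : Type*} [MeasurableSpace Ω] (μ : Measure Ω)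
    {X : Type*} [NormedAddCommGroup X]
    (u : Ω → ℝ≥0 → X) (hmeas : ∀ t : ℝ≥0, Measurable fun ω => ‖u ω t‖)
    (hlaw : ∀ t : ℝ≥0, μ.map (fun ω => ‖u ω t‖) = μ.map (fun ω => ‖u ω 0‖))
    (ε : ℝ) (hε : 0 < ε)
    (φ : ℝ≥0 → ℝ≥0)
    (hinc : ∀ᵐ ω ∂μ, ∃ A : ℝ, ∀ t t' : ℝ≥0, dist t t' ≤ 1 →
      ‖u ω t - u ω t'‖ ≤ A * (φ t : ℝ))
    (ψ : ℝ≥0 → ℝ≥0) (hψ : Monotone ψ)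
    (ψinv : ℝ≥0 → ℝ≥0) (hψinv : Function.RightInverse ψinv ψ) (hψinvmono : Monotone ψinv)
    (hens : ∫⁻ ω, (ψ ‖u ω 0‖₊ : ENNReal) ∂μ < ⊤) :
    ∀ᵐ ω ∂μ, ∃ C : ℝ, ∀ t : ℝ≥0,
      ‖u ω t‖ ≤ C * ((φ t : ℝ) + (ψinv ((1 + t) ^ (1 + ε)) : ℝ)) := by
  set g : ℝ≥0 → ℝ≥0 := fun t => ψinv ((1 + t) ^ (1 + ε))
  have hg_mono : Monotone g := fun s t hst =>
    hψinvmono (NNReal.rpow_le_rpow (add_le_add_right hst 1) (by linarith))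
  have hψinv_one : 0 < ψinv 1 := by
    refine pos_of_ne_zero fun h => ?_
    have : (1 : ℝ≥0) ≤ 0 :=
      calc 1 = ψ (ψinv 1) := (hψinv 1).symm
        _ ≤ ψ (ψinv 0) := hψ (h.le.trans bot_le)
        _ = 0 := hψinv 0
    exact absurd this (by norm_num)
  have hg_pos (t : ℝ≥0) : 0 < g t :=
    hψinv_one.trans_le (by simpa [g] using hg_mono (zero_le : 0 ≤ t))
  filter_upwards [hinc, ae_eventually_apply_nnnorm_lt_of_map_eq u hmeas hlaw hψ.measurable hens
    (c := fun n => (1 + (n : ℝ≥0)) ^ (1 + ε)) (fun n => by positivity)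
    (NNReal.summable_one_add_nat_rpow_inv (by linarith))]
    with ω ⟨A, hA⟩ hev
  obtain ⟨C, hC, hCn⟩ := exists_forall_le_mul_of_eventually_le (a := fun n => ‖u ω n‖)
    (b := fun n => g n) (fun n => hg_pos n)
    (hev.mono fun n hn => NNReal.coe_le_coe.mpr (hψ.le_of_lt_of_rightInverse hψinv hn))
  exact exists_norm_le_mul_add_of_forall_nat hg_mono hA hC hCn

/-- Corollary (stationary case): for a process whose norm marginals are identically
distributed, a single-time ensemble bound `E[ψ(‖u(0)‖)] < ∞` together with a pathwise
local increment control yields `‖u^ω(t)‖ ≤ C(ω) (φ(t) + ψ⁻¹((1+t)^{1+ε}))`. -/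
theorem stmt2 {Ω : Type*} [MeasurableSpace Ω] (μ : Measure Ω) [IsProbabilityMeasure μ]
    {X : Type*} [NormedAddCommGroup X] [NormedSpace ℝ X] [CompleteSpace X]
    (u : Ω → ℝ≥0 → X) (hmeas : ∀ t : ℝ≥0, Measurable fun ω => ‖u ω t‖)
    (hlaw : ∀ t : ℝ≥0, μ.map (fun ω => ‖u ω t‖) = μ.map (fun ω => ‖u ω 0‖))
    (ε : ℝ) (hε : 0 < ε)
    (φ : ℝ≥0 → ℝ≥0) (hφ : Monotone φ)
    (hinc : ∀ᵐ ω ∂μ, ∃ A : ℝ, ∀ t t' : ℝ≥0, dist t t' ≤ 1 →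
      ‖u ω t - u ω t'‖ ≤ A * (φ t : ℝ))
    (ψ : ℝ≥0 → ℝ≥0) (hψ : Monotone ψ) (hψbij : Function.Bijective ψ)
    (ψinv : ℝ≥0 → ℝ≥0) (hψinv : Function.RightInverse ψinv ψ) (hψinvmono : Monotone ψinv)
    (hens : ∫⁻ ω, (ψ ‖u ω 0‖₊ : ENNReal) ∂μ < ⊤) :
    ∀ᵐ ω ∂μ, ∃ C : ℝ, ∀ t : ℝ≥0,
      ‖u ω t‖ ≤ C * ((φ t : ℝ) + (ψinv ((1 + t) ^ (1 + ε)) : ℝ)) :=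
  stmt2_general μ u hmeas hlaw ε hε φ hinc ψ hψ ψinv hψinv hψinvmono hens
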